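/- arXiv:2310.13666 — 8 statements merged into one kernel-verified Lean document; each statement's English description precedes it below -/
import Mathlib

section
/- The function h₀ satisfies h₀(0) = 0, h₀ is non-decreasing on [0,∞), and h₀ is strictly increasing on (0,∞). -/
/-!
`h₀` is the product of `(1 - g₊) + (1 - g₋) / v_s`, which is positive and non-decreasing
because `φ` is non-decreasing, and of `ψ_α (ℓ / ℓ_crit)`, which vanishes at `0`, is
non-negative and is strictly increasing on `(0, ∞)` since `x ↦ (c / x) ^ α` is strictly
decreasing there.
-/

open Set Real

lemma MonotoneOn.mul_strictMonoOn {α M₀ : Type*} [Mul M₀] [Zero M₀] [Preorder M₀]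
    [PosMulStrictMono M₀] [MulPosMono M₀] [Preorder α] {f g : α → M₀} {s : Set α}
    (hf : MonotoneOn f s) (hg : StrictMonoOn g s) (hf₀ : ∀ x ∈ s, 0 < f x)
    (hg₀ : ∀ x ∈ s, 0 ≤ g x) : StrictMonoOn (f * g) s :=
  fun a ha b hb hab ↦ calc
    f a * g a < f a * g b := mul_lt_mul_of_pos_left (hg ha hb hab) (hf₀ a ha)
    _ ≤ f b * g b := mul_le_mul_of_nonneg_right (hf ha hb hab.le) (hg₀ b hb)

lemma StrictMonoOn.monotoneOn_Ici {α β : Type*} [PartialOrder α] [Preorder β]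
    {f : α → β} {a : α} (hf : StrictMonoOn f (Ioi a)) (ha : ∀ x, a < x → f a ≤ f x) :
    MonotoneOn f (Ici a) := by
  intro x hx y hy hxy
  rcases (mem_Ici.1 hx).eq_or_lt with rfl | hax
  · rcases (mem_Ici.1 hy).eq_or_lt with rfl | hay
    · exact le_rfl
    · exact ha y hay
  · exact hf.monotoneOn hax (hax.trans_le hxy) hxy

lemma strictMonoOn_exp_neg_div_rpow {c α : ℝ} (hc : 0 < c) (hα : 0 < α) :
    StrictMonoOn (fun x : ℝ ↦ exp (-(c / x) ^ α)) (Ioi 0) := by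
  intro x hx y hy hxy
  simp only [exp_lt_exp, neg_lt_neg_iff]
  exact rpow_lt_rpow (div_nonneg hc.le (mem_Ioi.1 hy).le)
    (div_lt_div_of_pos_left hc hx hxy) hα

/-- The growth fraction `g_*^±` with floor rate `m`, catastrophe strength `η`, base rate `lam`
and length scale `l0`. -/
noncomputable def gStar (m η lam l0 : ℝ) (φ : ℝ → ℝ) (ℓ : ℝ) : ℝ :=
  1 / (1 + max m ((1 + η * φ (ℓ / l0)) * lam))

lemma one_sub_gStar_pos {m : ℝ} (hm : 0 < m) (η lam l0 : ℝ) (φ : ℝ → ℝ) (ℓ : ℝ) :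
    0 < 1 - gStar m η lam l0 φ ℓ := by
  have hlt : 1 < 1 + max m ((1 + η * φ (ℓ / l0)) * lam) := by simp [hm]
  rw [gStar, sub_pos, div_lt_one (by linarith)]
  exact hlt

lemma monotoneOn_one_sub_gStar {m η lam l0 : ℝ} {φ : ℝ → ℝ} (hm : 0 ≤ m) (hη : 0 ≤ η)
    (hlam : 0 ≤ lam) (hl0 : 0 < l0) (hφ : MonotoneOn φ (Ici 0)) :
    MonotoneOn (fun ℓ ↦ 1 - gStar m η lam l0 φ ℓ) (Ici 0) := by
  intro a ha b hb hab
  have hφab : φ (a / l0) ≤ φ (b / l0) :=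
    hφ (div_nonneg ha hl0.le) (div_nonneg hb hl0.le) (by gcongr)
  have hpos : 0 < 1 + max m ((1 + η * φ (a / l0)) * lam) := by positivity
  exact sub_le_sub_left (one_div_le_one_div_of_le hpos (by gcongr)) 1

theorem stmt4_general
    (α : ℝ) (hα : 1 ≤ α)
    (ψ : ℝ → ℝ) (hψ0 : ψ 0 = 0)
    (hψ : ∀ x : ℝ, 0 < x → ψ x = Real.exp (-((Real.Gamma (1 + 1/α) / x) ^ α)))
    (φ : ℝ → ℝ) (hφm : MonotoneOn φ (Set.Ici 0))
    (vs lcrit l0 lamp lamm lammin : ℝ)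
    (hvs : 0 < vs)
    (hlc : 0 < lcrit) (hl0 : 0 < l0)
    (hlamp : 0 < lamp) (hlamm : 0 < lamm) (hlammin : 0 < lammin)
    (ηp ηm : ℝ) (hηp : 0 ≤ ηp) (hηm : 0 ≤ ηm)
    (gp gm : ℝ → ℝ)
    (hgp : ∀ ℓ, gp ℓ = 1 / (1 + max lammin ((1 + ηp * φ (ℓ / l0)) * lamp)))
    (hgm : ∀ ℓ, gm ℓ = 1 / (1 + max lammin ((1 + ηm * φ (ℓ / l0)) * lamm)))
    (h0 : ℝ → ℝ)
    (hh0 : ∀ ℓ, h0 ℓ = ((1 - gp ℓ) + (1 - gm ℓ) / vs) * ψ (ℓ / lcrit)) :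
    h0 0 = 0 ∧ MonotoneOn h0 (Set.Ici 0) ∧ StrictMonoOn h0 (Set.Ioi 0) := by
  obtain rfl : gp = gStar lammin ηp lamp l0 φ := funext hgp
  obtain rfl : gm = gStar lammin ηm lamm l0 φ := funext hgm
  set A : ℝ → ℝ := fun ℓ ↦ (1 - gStar lammin ηp lamp l0 φ ℓ)
    + (1 - gStar lammin ηm lamm l0 φ ℓ) / vs
  obtain rfl : h0 = A * fun ℓ ↦ ψ (ℓ / lcrit) := funext hh0
  have hA_pos (ℓ : ℝ) : 0 < A ℓ :=
    add_pos (one_sub_gStar_pos hlammin ..) (div_pos (one_sub_gStar_pos hlammin ..) hvs)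
  have hA_mono : MonotoneOn A (Ici 0) := fun a ha b hb hab ↦ add_le_add
    (monotoneOn_one_sub_gStar hlammin.le hηp hlamp.le hl0 hφm ha hb hab)
    (div_le_div_of_nonneg_right
      (monotoneOn_one_sub_gStar hlammin.le hηm hlamm.le hl0 hφm ha hb hab) hvs.le)
  have hψ_strict : StrictMonoOn ψ (Ioi 0) :=
    (strictMonoOn_exp_neg_div_rpow (Gamma_pos_of_pos (by positivity)) (by linarith)).congr
      fun x hx ↦ (hψ x hx).symm
  have hψ_nonneg : ∀ x ∈ Ici (0 : ℝ), 0 ≤ ψ x := fun x hx ↦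
    (mem_Ici.1 hx).eq_or_lt.elim (fun h ↦ h ▸ hψ0.ge) fun h ↦ (hψ x h).symm ▸ (exp_pos _).le
  have hψ_mono : MonotoneOn ψ (Ici 0) :=
    hψ_strict.monotoneOn_Ici fun x hx ↦ hψ0.symm ▸ hψ_nonneg x (mem_Ici.2 hx.le)
  have hdiv : StrictMono fun ℓ : ℝ ↦ ℓ / lcrit := fun _ _ h ↦ div_lt_div_of_pos_right h hlc
  have hdiv_Ici : MapsTo (· / lcrit) (Ici 0) (Ici 0) := fun _ h ↦ div_nonneg h hlc.le
  have hdiv_Ioi : MapsTo (· / lcrit) (Ioi 0) (Ioi 0) := fun _ h ↦ div_pos h hlc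
  refine ⟨by simp [hψ0], ?_, ?_⟩
  · exact hA_mono.mul (hψ_mono.comp (hdiv.monotone.monotoneOn _) hdiv_Ici) (fun x _ ↦ (hA_pos x).le)
      fun x hx ↦ hψ_nonneg _ (hdiv_Ici hx)
  · exact (hA_mono.mono Ioi_subset_Ici_self).mul_strictMonoOn
      (hψ_strict.comp (hdiv.strictMonoOn _) hdiv_Ioi) (fun x _ ↦ hA_pos x)
      fun x hx ↦ hψ_nonneg _ (Ioi_subset_Ici_self (hdiv_Ioi hx))

/-- `h₀(0) = 0`, `h₀` is non-decreasing on `[0,∞)` and strictly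
increasing on `(0,∞)`. -/
theorem stmt4
    (α : ℝ) (hα : 1 ≤ α)
    (ψ : ℝ → ℝ) (hψ0 : ψ 0 = 0)
    (hψ : ∀ x : ℝ, 0 < x → ψ x = Real.exp (-((Real.Gamma (1 + 1/α) / x) ^ α)))
    (φ : ℝ → ℝ) (hφc : ContinuousOn φ (Set.Ici 0)) (hφm : MonotoneOn φ (Set.Ici 0))
    (hφ0 : φ 0 = -1) (hφ1 : φ 1 = 0)
    (δsp vp vg vs fhalf lcrit l0 lamp lamm lamsg lammin : ℝ)
    (hδsp : 0 < δsp) (hvp : 0 < vp) (hvg : 0 < vg) (hvs : 0 < vs)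
    (hfh : 0 < fhalf) (hlc : 0 < lcrit) (hl0 : 0 < l0)
    (hlamp : 0 < lamp) (hlamm : 0 < lamm) (hlamsg : 0 < lamsg) (hlammin : 0 < lammin)
    (ηp ηm : ℝ) (hηp : 0 ≤ ηp) (hηm : 0 ≤ ηm)
    (N : ℕ) (hN : 0 < N)
    (T : ℝ) (hT : (N : ℝ) * l0 < T)
    (gp gm : ℝ → ℝ)
    (hgp : ∀ ℓ, gp ℓ = 1 / (1 + max lammin ((1 + ηp * φ (ℓ / l0)) * lamp)))
    (hgm : ∀ ℓ, gm ℓ = 1 / (1 + max lammin ((1 + ηm * φ (ℓ / l0)) * lamm)))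
    (h1 h0 : ℝ → ℝ)
    (hh1 : ∀ ℓ, h1 ℓ = vp * (gp ℓ + gm ℓ / vg) * ((T - (N : ℝ) * ℓ) / (fhalf + (T - (N : ℝ) * ℓ))))
    (hh0 : ∀ ℓ, h0 ℓ = ((1 - gp ℓ) + (1 - gm ℓ) / vs) * ψ (ℓ / lcrit)) :
    h0 0 = 0 ∧ MonotoneOn h0 (Set.Ici 0) ∧ StrictMonoOn h0 (Set.Ioi 0) :=
  stmt4_general α hα ψ hψ0 hψ φ hφm vs lcrit l0 lamp lamm lammin hvs hlc hl0 hlamp hlamm hlammin ηp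
    ηm hηp hηm gp gm hgp hgm h0 hh0
end

section
/- The function h₁ satisfies h₁(0) > 0, h₁(T̃/N) = 0, and h₁ is strictly decreasing on the interval [0, T̃/N]. -/
/-!
`h₁` is the product of the positive factor `v⁺ (g₊ + g₋ / v_g)`, which is non-increasing in `ℓ`
because `φ` is non-decreasing, and the saturating factor `x / (f_{1/2} + x)` at `x = T̃ - N ℓ`,
which is strictly increasing in `x ≥ 0` and vanishes at `x = 0`, i.e. at `ℓ = T̃ / N`.
-/

open Set

lemma AntitoneOn.mul_strictAntiOn_of_pos {s : Set ℝ} {u v : ℝ → ℝ}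
    (hu : AntitoneOn u s) (hu_pos : ∀ x ∈ s, 0 < u x)
    (hv : StrictAntiOn v s) (hv_nonneg : ∀ x ∈ s, 0 ≤ v x) :
    StrictAntiOn (fun x => u x * v x) s := fun a ha b hb hab =>
  calc u b * v b ≤ u a * v b := mul_le_mul_of_nonneg_right (hu ha hb hab.le) (hv_nonneg b hb)
    _ < u a * v a := mul_lt_mul_of_pos_left (hv ha hb hab) (hu_pos a ha)

lemma strictMonoOn_div_add_self {f : ℝ} (hf : 0 < f) :
    StrictMonoOn (fun x => x / (f + x)) (Ici 0) := by
  intro x hx y hy hxy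
  rw [mem_Ici] at hx hy
  rw [div_lt_div_iff₀ (by linarith) (by linarith)]
  nlinarith

lemma one_div_one_add_max_pos {m : ℝ} (hm : 0 ≤ m) (x : ℝ) : 0 < 1 / (1 + max m x) :=
  one_div_pos.mpr (by linarith [le_max_left m x])

section CatastropheRate

variable {φ : ℝ → ℝ} {l0 η lam : ℝ}

lemma monotoneOn_catastrophe_rate (hφm : MonotoneOn φ (Ici 0)) (hl0 : 0 ≤ l0) (hη : 0 ≤ η)
    (hlam : 0 ≤ lam) : MonotoneOn (fun ℓ => (1 + η * φ (ℓ / l0)) * lam) (Ici 0) := by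
  intro a ha b hb hab
  have hφab : φ (a / l0) ≤ φ (b / l0) :=
    hφm (div_nonneg ha hl0) (div_nonneg hb hl0) (div_le_div_of_nonneg_right hab hl0)
  dsimp only
  gcongr

lemma antitoneOn_one_div_one_add_max_catastrophe_rate (hφm : MonotoneOn φ (Ici 0))
    (hl0 : 0 ≤ l0) (hη : 0 ≤ η) (hlam : 0 ≤ lam) {m : ℝ} (hm : 0 ≤ m) :
    AntitoneOn (fun ℓ => 1 / (1 + max m ((1 + η * φ (ℓ / l0)) * lam))) (Ici 0) :=
  fun _ ha _ hb hab => one_div_le_one_div_of_le (one_div_pos.mp (one_div_one_add_max_pos hm _))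
    (add_le_add_right (max_le_max le_rfl (monotoneOn_catastrophe_rate hφm hl0 hη hlam ha hb hab)) 1)

end CatastropheRate

lemma strictAntiOn_load_factor {f T : ℝ} {N : ℕ} (hf : 0 < f) (hN : 0 < N) :
    StrictAntiOn (fun ℓ => (T - N * ℓ) / (f + (T - N * ℓ))) (Icc 0 (T / N)) := by
  have hN' : (0 : ℝ) < N := Nat.cast_pos.mpr hN
  have h_maps : MapsTo (fun ℓ : ℝ => T - N * ℓ) (Icc 0 (T / N)) (Ici 0) := fun ℓ hℓ => by
    have := mul_le_mul_of_nonneg_left hℓ.2 hN'.le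
    rw [mul_div_cancel₀ T hN'.ne'] at this
    exact sub_nonneg.mpr this
  intro a ha b hb hab
  exact strictMonoOn_div_add_self hf (h_maps hb) (h_maps ha)
    (sub_lt_sub_left (mul_lt_mul_of_pos_left hab hN') T)

theorem stmt5_general
    (φ : ℝ → ℝ) (hφm : MonotoneOn φ (Set.Ici 0))
    (vp vg fhalf l0 lamp lamm lammin : ℝ)
    (hvp : 0 < vp) (hvg : 0 < vg)
    (hfh : 0 < fhalf) (hl0 : 0 < l0)
    (hlamp : 0 < lamp) (hlamm : 0 < lamm) (hlammin : 0 < lammin)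
    (ηp ηm : ℝ) (hηp : 0 ≤ ηp) (hηm : 0 ≤ ηm)
    (N : ℕ) (hN : 0 < N)
    (T : ℝ) (hT : (N : ℝ) * l0 < T)
    (gp gm : ℝ → ℝ)
    (hgp : ∀ ℓ, gp ℓ = 1 / (1 + max lammin ((1 + ηp * φ (ℓ / l0)) * lamp)))
    (hgm : ∀ ℓ, gm ℓ = 1 / (1 + max lammin ((1 + ηm * φ (ℓ / l0)) * lamm)))
    (h1 : ℝ → ℝ)
    (hh1 : ∀ ℓ, h1 ℓ = vp * (gp ℓ + gm ℓ / vg) * ((T - (N : ℝ) * ℓ) / (fhalf + (T - (N : ℝ) * ℓ)))) :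
    0 < h1 0 ∧ h1 (T / (N : ℝ)) = 0 ∧ StrictAntiOn h1 (Set.Icc 0 (T / (N : ℝ))) := by
  have hT_pos : 0 < T := lt_trans (mul_pos (Nat.cast_pos.mpr hN) hl0) hT
  have hg_pos : ∀ ℓ, 0 < vp * (gp ℓ + gm ℓ / vg) := fun ℓ => by
    have := hgp ℓ ▸ one_div_one_add_max_pos hlammin.le _
    have := hgm ℓ ▸ one_div_one_add_max_pos hlammin.le _
    positivity
  have hg_anti : AntitoneOn (fun ℓ => vp * (gp ℓ + gm ℓ / vg)) (Ici 0) := by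
    intro a ha b hb hab
    have hp := antitoneOn_one_div_one_add_max_catastrophe_rate hφm hl0.le hηp hlamp.le
      hlammin.le ha hb hab
    have hm := antitoneOn_one_div_one_add_max_catastrophe_rate hφm hl0.le hηm hlamm.le
      hlammin.le ha hb hab
    simp only [← hgp, ← hgm] at hp hm ⊢
    gcongr
  have hTN : (N : ℝ) * (T / N) = T := mul_div_cancel₀ T (Nat.cast_ne_zero.mpr hN.ne')
  refine ⟨?_, ?_, ?_⟩
  · rw [hh1, mul_zero, sub_zero]
    exact mul_pos (hg_pos 0) (div_pos hT_pos (by positivity))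
  · rw [hh1, hTN, sub_self, zero_div, mul_zero]
  · have h_eq : h1 = fun ℓ => vp * (gp ℓ + gm ℓ / vg) *
        ((T - N * ℓ) / (fhalf + (T - N * ℓ))) := funext hh1
    rw [h_eq]
    refine (hg_anti.mono Icc_subset_Ici_self).mul_strictAntiOn_of_pos (fun ℓ _ => hg_pos ℓ)
      (strictAntiOn_load_factor hfh hN) (fun ℓ hℓ => ?_)
    have := mul_le_mul_of_nonneg_left hℓ.2 (Nat.cast_nonneg N)
    rw [hTN] at this
    exact div_nonneg (by linarith) (by linarith)

/-- `h₁(0) > 0`, `h₁(T̃/N) = 0`, and `h₁` is strictly decreasing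
on `[0, T̃/N]`. -/
theorem stmt5
    (α : ℝ) (hα : 1 ≤ α)
    (ψ : ℝ → ℝ) (hψ0 : ψ 0 = 0)
    (hψ : ∀ x : ℝ, 0 < x → ψ x = Real.exp (-((Real.Gamma (1 + 1/α) / x) ^ α)))
    (φ : ℝ → ℝ) (hφc : ContinuousOn φ (Set.Ici 0)) (hφm : MonotoneOn φ (Set.Ici 0))
    (hφ0 : φ 0 = -1) (hφ1 : φ 1 = 0)
    (δsp vp vg vs fhalf lcrit l0 lamp lamm lamsg lammin : ℝ)
    (hδsp : 0 < δsp) (hvp : 0 < vp) (hvg : 0 < vg) (hvs : 0 < vs)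
    (hfh : 0 < fhalf) (hlc : 0 < lcrit) (hl0 : 0 < l0)
    (hlamp : 0 < lamp) (hlamm : 0 < lamm) (hlamsg : 0 < lamsg) (hlammin : 0 < lammin)
    (ηp ηm : ℝ) (hηp : 0 ≤ ηp) (hηm : 0 ≤ ηm)
    (N : ℕ) (hN : 0 < N)
    (T : ℝ) (hT : (N : ℝ) * l0 < T)
    (gp gm : ℝ → ℝ)
    (hgp : ∀ ℓ, gp ℓ = 1 / (1 + max lammin ((1 + ηp * φ (ℓ / l0)) * lamp)))
    (hgm : ∀ ℓ, gm ℓ = 1 / (1 + max lammin ((1 + ηm * φ (ℓ / l0)) * lamm)))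
    (h1 h0 : ℝ → ℝ)
    (hh1 : ∀ ℓ, h1 ℓ = vp * (gp ℓ + gm ℓ / vg) * ((T - (N : ℝ) * ℓ) / (fhalf + (T - (N : ℝ) * ℓ))))
    (hh0 : ∀ ℓ, h0 ℓ = ((1 - gp ℓ) + (1 - gm ℓ) / vs) * ψ (ℓ / lcrit)) :
    0 < h1 0 ∧ h1 (T / (N : ℝ)) = 0 ∧ StrictAntiOn h1 (Set.Icc 0 (T / (N : ℝ))) :=
  stmt5_general φ hφm vp vg fhalf l0 lamp lamm lammin hvp hvg hfh hl0 hlamp hlamm hlammin ηp ηm hηp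
    hηm N hN T hT gp gm hgp hgm h1 hh1
end

section
/- On the boundary of the closed box [0, T̃/N] × [0,1] × [0,1] the vector field F points into the interior in the following componentwise sense. For every (ℓ, g^+, g^-) ∈ [0, T̃/N] × [0,1] × [0,1]: (i) if g^+ = 0 then F₂ = 1 > 0; (ii) if g^+ = 1 then F₂ < 0; (iii) if g^- = 0 then F₃ = 1/λ_{s→g} > 0; (iv) if g^- = 1 then F₃ < 0; (v) if ℓ = 0 and g^+ + g^- > 0 then F₁ > 0; (vi) if ℓ = T̃/N and g^+ + g^- < 2 then F₁ < 0. -/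
/-! The switching components reduce to `1` at `g = 0` and to `-max λ̃_min _ < 0` at `g = 1`.
At `ℓ = 0` the shrinking term of `F₁` drops out because `ψ_α(0) = 0`, and at `ℓ = T̃/N` the
growth term drops out because the free tubulin `T̃ - Nℓ` is exhausted, while `ψ_α > 0` there. -/

lemma add_div_pos_of_add_pos {a b v : ℝ} (ha : 0 ≤ a) (hb : 0 ≤ b) (hv : 0 < v)
    (hab : 0 < a + b) : 0 < a + b / v := by
  rcases ha.eq_or_lt with rfl | ha
  · simpa using div_pos (by simpa using hab) hv
  · exact add_pos_of_pos_of_nonneg ha (div_nonneg hb hv.le)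

theorem stmt8_general
    (α : ℝ)
    (ψ : ℝ → ℝ) (hψ0 : ψ 0 = 0)
    (hψ : ∀ x : ℝ, 0 < x → ψ x = Real.exp (-((Real.Gamma (1 + 1/α) / x) ^ α)))
    (φ : ℝ → ℝ)
    (δsp vp vg vs fhalf lcrit l0 lamp lamm lamsg lammin : ℝ)
    (hδsp : 0 < δsp) (hvp : 0 < vp) (hvg : 0 < vg) (hvs : 0 < vs)
    (hfh : 0 < fhalf) (hlc : 0 < lcrit) (hl0 : 0 < l0)
    (hlamsg : 0 < lamsg) (hlammin : 0 < lammin)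
    (ηp ηm : ℝ)
    (N : ℕ) (hN : 0 < N)
    (T : ℝ) (hT : (N : ℝ) * l0 < T)
    (F1 F2 F3 : ℝ → ℝ → ℝ → ℝ)
    (hF1 : ∀ ℓ a b, F1 ℓ a b = δsp * (vp * (a + b / vg) * ((T - (N : ℝ) * ℓ) / (fhalf + (T - (N : ℝ) * ℓ))) - ((1 - a) + (1 - b) / vs) * ψ (ℓ / lcrit)))
    (hF2 : ∀ ℓ a b, F2 ℓ a b = (1 - a) - a * max lammin ((1 + ηp * φ (ℓ / l0)) * lamp))
    (hF3 : ∀ ℓ a b, F3 ℓ a b = (1 / lamsg) * ((1 - b) - b * max lammin ((1 + ηm * φ (ℓ / l0)) * lamm))) :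
    ∀ ℓ ∈ Set.Icc 0 (T / (N : ℝ)), ∀ a ∈ Set.Icc (0:ℝ) 1, ∀ b ∈ Set.Icc (0:ℝ) 1,
      (a = 0 → F2 ℓ a b = 1 ∧ (0:ℝ) < 1) ∧
      (a = 1 → F2 ℓ a b < 0) ∧
      (b = 0 → F3 ℓ a b = 1 / lamsg ∧ 0 < 1 / lamsg) ∧
      (b = 1 → F3 ℓ a b < 0) ∧
      (ℓ = 0 → 0 < a + b → 0 < F1 ℓ a b) ∧
      (ℓ = T / (N : ℝ) → a + b < 2 → F1 ℓ a b < 0) := by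
  rintro ℓ - a ⟨ha0, ha1⟩ b ⟨hb0, hb1⟩
  have hN' : (0 : ℝ) < N := by exact_mod_cast hN
  have hT0 : 0 < T := (mul_pos hN' hl0).trans hT
  refine ⟨?_, ?_, ?_, ?_, ?_, ?_⟩
  · rintro rfl
    simp [hF2]
  · rintro rfl
    simp [hF2, hlammin]
  · rintro rfl
    simp [hF3, hlamsg]
  · rintro rfl
    simp [hF3, hlamsg, hlammin]
  · rintro rfl hab
    have hgrowth : 0 < a + b / vg := add_div_pos_of_add_pos ha0 hb0 hvg hab
    simp only [hF1, mul_zero, sub_zero, zero_div, hψ0]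
    positivity
  · rintro rfl hab
    have hshrink : 0 < (1 - a) + (1 - b) / vs :=
      add_div_pos_of_add_pos (by linarith) (by linarith) hvs (by linarith)
    have hψpos : 0 < ψ (T / N / lcrit) := by
      rw [hψ _ (by positivity)]
      exact Real.exp_pos _
    simp only [hF1, mul_div_cancel₀ T hN'.ne', sub_self, zero_div, mul_zero, zero_sub]
    exact mul_neg_of_pos_of_neg hδsp (neg_neg_of_pos (mul_pos hshrink hψpos))

/-- on the boundary of the box `[0,T̃/N] × [0,1] × [0,1]` the
vector field `F` points into the interior, componentwise. -/
theorem stmt8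
    (α : ℝ) (hα : 1 ≤ α)
    (ψ : ℝ → ℝ) (hψ0 : ψ 0 = 0)
    (hψ : ∀ x : ℝ, 0 < x → ψ x = Real.exp (-((Real.Gamma (1 + 1/α) / x) ^ α)))
    (φ : ℝ → ℝ) (hφc : ContinuousOn φ (Set.Ici 0)) (hφm : MonotoneOn φ (Set.Ici 0))
    (hφ0 : φ 0 = -1) (hφ1 : φ 1 = 0)
    (δsp vp vg vs fhalf lcrit l0 lamp lamm lamsg lammin : ℝ)
    (hδsp : 0 < δsp) (hvp : 0 < vp) (hvg : 0 < vg) (hvs : 0 < vs)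
    (hfh : 0 < fhalf) (hlc : 0 < lcrit) (hl0 : 0 < l0)
    (hlamp : 0 < lamp) (hlamm : 0 < lamm) (hlamsg : 0 < lamsg) (hlammin : 0 < lammin)
    (ηp ηm : ℝ) (hηp : 0 ≤ ηp) (hηm : 0 ≤ ηm)
    (N : ℕ) (hN : 0 < N)
    (T : ℝ) (hT : (N : ℝ) * l0 < T)
    (F1 F2 F3 : ℝ → ℝ → ℝ → ℝ)
    (hF1 : ∀ ℓ a b, F1 ℓ a b = δsp * (vp * (a + b / vg) * ((T - (N : ℝ) * ℓ) / (fhalf + (T - (N : ℝ) * ℓ))) - ((1 - a) + (1 - b) / vs) * ψ (ℓ / lcrit)))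
    (hF2 : ∀ ℓ a b, F2 ℓ a b = (1 - a) - a * max lammin ((1 + ηp * φ (ℓ / l0)) * lamp))
    (hF3 : ∀ ℓ a b, F3 ℓ a b = (1 / lamsg) * ((1 - b) - b * max lammin ((1 + ηm * φ (ℓ / l0)) * lamm))) :
    ∀ ℓ ∈ Set.Icc 0 (T / (N : ℝ)), ∀ a ∈ Set.Icc (0:ℝ) 1, ∀ b ∈ Set.Icc (0:ℝ) 1,
      (a = 0 → F2 ℓ a b = 1 ∧ (0:ℝ) < 1) ∧
      (a = 1 → F2 ℓ a b < 0) ∧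
      (b = 0 → F3 ℓ a b = 1 / lamsg ∧ 0 < 1 / lamsg) ∧
      (b = 1 → F3 ℓ a b < 0) ∧
      (ℓ = 0 → 0 < a + b → 0 < F1 ℓ a b) ∧
      (ℓ = T / (N : ℝ) → a + b < 2 → F1 ℓ a b < 0) :=
  stmt8_general α ψ hψ0 hψ φ δsp vp vg vs fhalf lcrit l0 lamp lamm lamsg lammin hδsp hvp hvg hvs hfh
    hlc hl0 hlamsg hlammin ηp ηm N hN T hT F1 F2 F3 hF1 hF2 hF3
end

section
/- Assume in addition that the catastrophe shape function φ is Lipschitz continuous on the interval [0, T̃/(N ℓ₀)]. Then the vector field F is Lipschitz continuous on the closed box [0, T̃/N] × [0,1] × [0,1]: there exists K > 0 such that ‖F(x) − F(y)‖ ≤ K ‖x − y‖ for all x, y in the box. -/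
/-!
Write `F = G ∘ (p ↦ (p, Φ p.1))`, where `Φ ℓ` collects the three non-smooth scalar ingredients
`ψ_α(ℓ/ℓ_crit)` and `max(λ̃_min, (1 + η^± φ(ℓ/ℓ₀)) λ^±)`, and `G` is the remaining rational
expression. Each ingredient is Lipschitz in `ℓ`. For `ψ_α`, with `c = Γ(1 + 1/α)` and `t = c/x`,
the derivative on `(0, ∞)` is `(α/c) t^(α+1) e^(-t^α) ≤ 4α/c`, and `ψ_α` is continuous at `0`.
On the convex set `ℓ ∈ [0, T̃/N]` the denominator `f_{1/2} + T̃ - Nℓ` stays positive, so `G` is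
`C¹`, hence locally Lipschitz there, and a locally Lipschitz map is Lipschitz on the compact box.
-/

open Set Filter Topology Real

theorem LipschitzOnWith.locallyLipschitzOn {α β : Type*} [PseudoEMetricSpace α]
    [PseudoEMetricSpace β] {f : α → β} {s : Set α} {K : NNReal} (hf : LipschitzOnWith K f s) :
    LocallyLipschitzOn s f :=
  fun _ _ ↦ ⟨K, s, self_mem_nhdsWithin, hf⟩

theorem LocallyLipschitzOn.comp {α β γ : Type*} [PseudoEMetricSpace α] [PseudoEMetricSpace β]
    [PseudoEMetricSpace γ] {f : β → γ} {g : α → β} {s : Set α} {t : Set β}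
    (hf : LocallyLipschitzOn t f) (hg : LocallyLipschitzOn s g) (hst : MapsTo g s t) :
    LocallyLipschitzOn s (f ∘ g) := by
  intro x hx
  obtain ⟨Kf, u, hu, hfu⟩ := hf (hst hx)
  obtain ⟨Kg, v, hv, hgv⟩ := hg hx
  exact ⟨Kf * Kg, v ∩ g ⁻¹' u, inter_mem hv ((hg.continuousOn x hx).tendsto_nhdsWithin hst hu),
    hfu.comp (hgv.mono inter_subset_left) fun y hy ↦ hy.2⟩

theorem ContDiffOn.exists_lipschitzOnWith_comp {X E F : Type*} [PseudoMetricSpace X]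
    [NormedAddCommGroup E] [NormedSpace ℝ E] [NormedAddCommGroup F] [NormedSpace ℝ F]
    {g : E → F} {f : X → E} {s : Set X} {t : Set E} {K : NNReal}
    (hg : ContDiffOn ℝ 1 g t) (ht : Convex ℝ t) (hf : LipschitzOnWith K f s) (hs : IsCompact s)
    (hst : MapsTo f s t) : ∃ K', LipschitzOnWith K' (g ∘ f) s :=
  ((hg.locallyLipschitzOn ht).comp hf.locallyLipschitzOn hst).exists_lipschitzOnWith_of_compact hs

theorem LipschitzOnWith.comp_div_const {f : ℝ → ℝ} {s t : Set ℝ} {K : NNReal} {c : ℝ}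
    (hf : LipschitzOnWith K f t) (hst : MapsTo (· / c) s t) :
    LipschitzOnWith (K * ‖c⁻¹‖₊) (fun x ↦ f (x / c)) s := by
  have hdiv : LipschitzWith ‖c⁻¹‖₊ fun x : ℝ ↦ x / c := by
    simpa only [smul_eq_mul, mul_comm c⁻¹, ← div_eq_mul_inv] using lipschitzWith_smul (β := ℝ) c⁻¹
  exact hf.comp hdiv.lipschitzOnWith hst

theorem lipschitzWith_max_const_affine (m η ρ : ℝ) :
    LipschitzWith ‖η * ρ‖₊ fun y : ℝ ↦ max m ((1 + η * y) * ρ) := by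
  refine LipschitzWith.const_max (LipschitzWith.of_dist_le_mul fun x y ↦ ?_) m
  rw [Real.dist_eq, Real.dist_eq, coe_nnnorm, Real.norm_eq_abs, ← abs_mul]
  ring_nf
  rfl

theorem sq_one_add_le_four_mul_exp {u : ℝ} (hu : 0 ≤ u) : (1 + u) ^ 2 ≤ 4 * exp u := by
  have h := add_one_le_exp (u / 2)
  have hsq : (u / 2 + 1) ^ 2 ≤ exp (u / 2) ^ 2 := by gcongr
  rw [← exp_nat_mul, Nat.cast_ofNat, mul_div_cancel₀ u two_ne_zero] at hsq
  nlinarith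

theorem rpow_add_one_mul_exp_neg_rpow_le {α t : ℝ} (hα : 1 ≤ α) (ht : 0 < t) :
    t ^ (α + 1) * exp (-(t ^ α)) ≤ 4 := by
  set u := t ^ α
  have hu : 0 ≤ u := by positivity
  have htu : t ≤ 1 + u := by
    rcases le_or_gt t 1 with h | h
    · linarith
    · have := rpow_le_rpow_of_exponent_le h.le hα
      rw [rpow_one] at this
      linarith
  calc t ^ (α + 1) * exp (-u) = u * t * exp (-u) := by rw [rpow_add_one ht.ne']
    _ ≤ (1 + u) ^ 2 * exp (-u) := by gcongr; nlinarith
    _ ≤ 4 * exp u * exp (-u) := by gcongr; exact sq_one_add_le_four_mul_exp hu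
    _ = 4 := by rw [mul_assoc, ← exp_add, add_neg_cancel, exp_zero, mul_one]

theorem hasDerivAt_exp_neg_div_rpow {α c x : ℝ} (hc : 0 < c) (hx : 0 < x) :
    HasDerivAt (fun y ↦ exp (-((c / y) ^ α)))
      (α / c * ((c / x) ^ (α + 1) * exp (-((c / x) ^ α)))) x := by
  have hcx : 0 < c / x := div_pos hc hx
  have h := (((hasDerivAt_inv hx.ne').const_mul c).rpow_const (p := α)
    (Or.inl (by simpa [div_eq_mul_inv] using hcx.ne'))).neg.exp
  simp only [← div_eq_mul_inv] at h
  convert h using 1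
  · ext y; simp
  rw [rpow_add_one hcx.ne', rpow_sub_one hcx.ne', Pi.neg_apply]
  field_simp

theorem lipschitzOnWith_exp_neg_div_rpow {α c : ℝ} (hα : 1 ≤ α) (hc : 0 < c) :
    LipschitzOnWith (4 * α / c).toNNReal (fun x ↦ exp (-((c / x) ^ α))) (Ioi 0) := by
  refine (convex_Ioi 0).lipschitzOnWith_of_nnnorm_hasDerivWithin_le
    (fun x hx ↦ (hasDerivAt_exp_neg_div_rpow hc hx).hasDerivWithinAt) fun x hx ↦ ?_
  have hcx : 0 < c / x := div_pos hc hx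
  rw [← NNReal.coe_le_coe, coe_nnnorm, Real.norm_eq_abs, abs_of_nonneg (by positivity),
    Real.coe_toNNReal _ (by positivity)]
  calc α / c * ((c / x) ^ (α + 1) * exp (-((c / x) ^ α))) ≤ α / c * 4 := by
        gcongr; exact rpow_add_one_mul_exp_neg_rpow_le hα hcx
    _ = 4 * α / c := by ring

theorem tendsto_exp_neg_div_rpow_nhdsGT_zero {α c : ℝ} (hα : 0 < α) (hc : 0 < c) :
    Tendsto (fun x ↦ exp (-((c / x) ^ α))) (𝓝[>] 0) (𝓝 0) := by
  have h := (tendsto_rpow_atTop hα).comp (tendsto_inv_nhdsGT_zero.const_mul_atTop hc)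
  simpa [Function.comp_def, div_eq_mul_inv] using
    tendsto_exp_atBot.comp (tendsto_neg_atTop_atBot.comp h)

theorem lipschitzOnWith_Ici_of_eq_exp_neg_div_rpow {α c : ℝ} {ψ : ℝ → ℝ} (hα : 1 ≤ α)
    (hc : 0 < c) (hψ0 : ψ 0 = 0) (hψ : ∀ x, 0 < x → ψ x = exp (-((c / x) ^ α))) :
    LipschitzOnWith (4 * α / c).toNNReal ψ (Ici 0) := by
  have hlip : LipschitzOnWith (4 * α / c).toNNReal ψ (Ioi 0) := fun x hx y hy ↦ by
    simpa only [hψ x hx, hψ y hy] using lipschitzOnWith_exp_neg_div_rpow hα hc hx hy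
  rw [← closure_Ioi]
  refine hlip.closure fun x hx ↦ ?_
  rw [closure_Ioi] at hx
  rcases (mem_Ici.1 hx).eq_or_lt with rfl | hx
  · rw [closure_Ioi, ← continuousWithinAt_Ioi_iff_Ici, ContinuousWithinAt, hψ0]
    exact (tendsto_exp_neg_div_rpow_nhdsGT_zero (by linarith) hc).congr'
      (eventually_nhdsWithin_of_forall fun x hx ↦ (hψ x hx).symm)
  · exact (hlip.continuousOn.continuousAt (Ioi_mem_nhds hx)).continuousWithinAt

theorem stmt10_general
    (α : ℝ) (hα : 1 ≤ α)
    (ψ : ℝ → ℝ) (hψ0 : ψ 0 = 0)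
    (hψ : ∀ x : ℝ, 0 < x → ψ x = Real.exp (-((Real.Gamma (1 + 1/α) / x) ^ α)))
    (φ : ℝ → ℝ)
    (δsp vp vg vs fhalf lcrit l0 lamp lamm lamsg lammin : ℝ)
    (hfh : 0 < fhalf) (hlc : 0 < lcrit) (hl0 : 0 < l0)
    (ηp ηm : ℝ)
    (N : ℕ)
    (T : ℝ) (hT : (N : ℝ) * l0 < T)
    (F1 F2 F3 : ℝ → ℝ → ℝ → ℝ)
    (hF1 : ∀ ℓ a b, F1 ℓ a b = δsp * (vp * (a + b / vg) * ((T - (N : ℝ) * ℓ) / (fhalf + (T - (N : ℝ) * ℓ))) - ((1 - a) + (1 - b) / vs) * ψ (ℓ / lcrit)))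
    (hF2 : ∀ ℓ a b, F2 ℓ a b = (1 - a) - a * max lammin ((1 + ηp * φ (ℓ / l0)) * lamp))
    (hF3 : ∀ ℓ a b, F3 ℓ a b = (1 / lamsg) * ((1 - b) - b * max lammin ((1 + ηm * φ (ℓ / l0)) * lamm)))
    (Kφ : NNReal) (hφlip : LipschitzOnWith Kφ φ (Set.Icc 0 (T / ((N : ℝ) * l0))))
    (Fvec : ℝ × ℝ × ℝ → ℝ × ℝ × ℝ)
    (hFvec : ∀ p : ℝ × ℝ × ℝ,
      Fvec p = (F1 p.1 p.2.1 p.2.2, F2 p.1 p.2.1 p.2.2, F3 p.1 p.2.1 p.2.2)) :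
    ∃ K : NNReal, 0 < K ∧
      LipschitzOnWith K Fvec
        (Set.Icc 0 (T / (N : ℝ)) ×ˢ Set.Icc (0:ℝ) 1 ×ˢ Set.Icc (0:ℝ) 1) := by
  have hT0 : 0 ≤ T := (by positivity : 0 ≤ (N : ℝ) * l0).trans hT.le
  set Φ : ℝ → ℝ × ℝ × ℝ := fun ℓ ↦ (ψ (ℓ / lcrit),
    max lammin ((1 + ηp * φ (ℓ / l0)) * lamp), max lammin ((1 + ηm * φ (ℓ / l0)) * lamm))
  set G : (ℝ × ℝ × ℝ) × ℝ × ℝ × ℝ → ℝ × ℝ × ℝ := fun x ↦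
    (δsp * (vp * (x.1.2.1 + x.1.2.2 / vg) * ((T - N * x.1.1) / (fhalf + (T - N * x.1.1)))
        - ((1 - x.1.2.1) + (1 - x.1.2.2) / vs) * x.2.1),
      (1 - x.1.2.1) - x.1.2.1 * x.2.2.1, (1 / lamsg) * ((1 - x.1.2.2) - x.1.2.2 * x.2.2.2))
  have hF : Fvec = G ∘ fun p ↦ (p, Φ p.1) := funext fun p ↦ by
    simp only [hFvec, hF1, hF2, hF3, G, Φ, Function.comp_apply]
  have hψℓ := (lipschitzOnWith_Ici_of_eq_exp_neg_div_rpow hα (Gamma_pos_of_pos (by positivity))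
    hψ0 hψ).comp_div_const (s := Icc 0 (T / N)) fun ℓ hℓ ↦ div_nonneg hℓ.1 hlc.le
  have hφℓ := hφlip.comp_div_const (s := Icc 0 (T / N)) fun ℓ hℓ ↦
    ⟨div_nonneg hℓ.1 hl0.le, by rw [← div_div]; exact div_le_div_of_nonneg_right hℓ.2 hl0.le⟩
  have hΦ : LipschitzOnWith _ Φ (Icc 0 (T / N)) :=
    hψℓ.prodMk (((lipschitzWith_max_const_affine _ _ _).comp_lipschitzOnWith hφℓ).prodMk
      ((lipschitzWith_max_const_affine _ _ _).comp_lipschitzOnWith hφℓ))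
  set U : Set ((ℝ × ℝ × ℝ) × ℝ × ℝ × ℝ) := (Icc 0 (T / N) ×ˢ univ) ×ˢ univ
  have hG : ContDiffOn ℝ 1 G U := by
    have hden : ∀ x ∈ U, fhalf + (T - N * x.1.1) ≠ 0 := by
      rintro x ⟨⟨hℓ, -⟩, -⟩
      have := mul_le_of_le_div₀ hT0 (Nat.cast_nonneg N) hℓ.2
      nlinarith
    fun_prop (disch := exact hden)
  obtain ⟨K, hK⟩ := hG.exists_lipschitzOnWith_comp (((convex_Icc _ _).prod convex_univ).prod
    convex_univ) (LipschitzWith.id.lipschitzOnWith.prodMk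
      (hΦ.comp LipschitzWith.prod_fst.lipschitzOnWith fun p hp ↦ hp.1))
    (isCompact_Icc.prod (isCompact_Icc.prod isCompact_Icc)) fun p hp ↦ ⟨⟨hp.1, trivial⟩, trivial⟩
  rw [hF]
  exact ⟨max K 1, lt_max_of_lt_right one_pos, hK.weaken (le_max_left _ _)⟩

/-- if the shape function `φ` is Lipschitz on `[0, T̃/(Nℓ₀)]`,
then the vector field `F` is Lipschitz on the closed box
`[0,T̃/N] × [0,1] × [0,1]`. -/
theorem stmt10
    (α : ℝ) (hα : 1 ≤ α)
    (ψ : ℝ → ℝ) (hψ0 : ψ 0 = 0)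
    (hψ : ∀ x : ℝ, 0 < x → ψ x = Real.exp (-((Real.Gamma (1 + 1/α) / x) ^ α)))
    (φ : ℝ → ℝ) (hφc : ContinuousOn φ (Set.Ici 0)) (hφm : MonotoneOn φ (Set.Ici 0))
    (hφ0 : φ 0 = -1) (hφ1 : φ 1 = 0)
    (δsp vp vg vs fhalf lcrit l0 lamp lamm lamsg lammin : ℝ)
    (hδsp : 0 < δsp) (hvp : 0 < vp) (hvg : 0 < vg) (hvs : 0 < vs)
    (hfh : 0 < fhalf) (hlc : 0 < lcrit) (hl0 : 0 < l0)
    (hlamp : 0 < lamp) (hlamm : 0 < lamm) (hlamsg : 0 < lamsg) (hlammin : 0 < lammin)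
    (ηp ηm : ℝ) (hηp : 0 ≤ ηp) (hηm : 0 ≤ ηm)
    (N : ℕ) (hN : 0 < N)
    (T : ℝ) (hT : (N : ℝ) * l0 < T)
    (F1 F2 F3 : ℝ → ℝ → ℝ → ℝ)
    (hF1 : ∀ ℓ a b, F1 ℓ a b = δsp * (vp * (a + b / vg) * ((T - (N : ℝ) * ℓ) / (fhalf + (T - (N : ℝ) * ℓ))) - ((1 - a) + (1 - b) / vs) * ψ (ℓ / lcrit)))
    (hF2 : ∀ ℓ a b, F2 ℓ a b = (1 - a) - a * max lammin ((1 + ηp * φ (ℓ / l0)) * lamp))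
    (hF3 : ∀ ℓ a b, F3 ℓ a b = (1 / lamsg) * ((1 - b) - b * max lammin ((1 + ηm * φ (ℓ / l0)) * lamm)))
    (Kφ : NNReal) (hφlip : LipschitzOnWith Kφ φ (Set.Icc 0 (T / ((N : ℝ) * l0))))
    (Fvec : ℝ × ℝ × ℝ → ℝ × ℝ × ℝ)
    (hFvec : ∀ p : ℝ × ℝ × ℝ,
      Fvec p = (F1 p.1 p.2.1 p.2.2, F2 p.1 p.2.1 p.2.2, F3 p.1 p.2.1 p.2.2)) :
    ∃ K : NNReal, 0 < K ∧
      LipschitzOnWith K Fvec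
        (Set.Icc 0 (T / (N : ℝ)) ×ˢ Set.Icc (0:ℝ) 1 ×ˢ Set.Icc (0:ℝ) 1) :=
  stmt10_general α hα ψ hψ0 hψ φ δsp vp vg vs fhalf lcrit l0 lamp lamm lamsg lammin hfh hlc hl0 ηp
    ηm N T hT F1 F2 F3 hF1 hF2 hF3 Kφ hφlip Fvec hFvec
end

section
/- Let α ≥ 1 and let L̄, v̄_g^+, v̄_g^-, v̄_s^+, v̄_s^-, τ̄_g^+, τ̄_g^- be positive reals. Suppose w > 0 satisfies w · exp(−w^α) = (v̄_g^+ τ̄_g^+ / L̄) · Γ(1+1/α) · ln 2. Define λ_{g→s}^± = 1/τ̄_g^±, λ_{s→g}^+ = (v̄_s^+ / L̄) · Γ(1+1/α) · ln 2 / w, λ_{s→g}^- = λ_{s→g}^+ · (v̄_s^- /v̄_s^+) · (v̄_g^+ τ̄_g^+)/(v̄_g^- τ̄_g^-), and L_crit = v̄_s^+ ln 2 / λ_{s→g}^+. Then both steady-state flux-balance constraints hold at the target length L̄: v̄_g^+ λ_{s→g}^+ / (λ_{g→s}^+ + λ_{s→g}^+) = (v̄_s^+ λ_{g→s}^+ /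 (λ_{g→s}^+ + λ_{s→g}^+)) · ψ_α(L̄/L_crit) and v̄_g^- λ_{s→g}^- / (λ_{g→s}^- + λ_{s→g}^-) = (v̄_s^- λ_{g→s}^- / (λ_{g→s}^- + λ_{s→g}^-)) · ψ_α(L̄/L_crit); in particular the tubulin flux into the microtubule pool equals the flux out at average length L̄, so L̄ is the steady-state average microtubule length. -/
/-!
The rescue rate `λ_{s→g}^+` is tuned so that `L̄ / L_crit = Γ(1 + 1/α) / w`, hence
`ψ_α(L̄ / L_crit) = exp (-w ^ α)`. Clearing the common denominator `λ_{g→s} + λ_{s→g}`, each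
balance reduces to `v̄_g λ_{s→g} = v̄_s λ_{g→s} ψ_α`; at the plus end this is the defining
equation of `w` multiplied by `v̄_s^+ / τ̄_g^+`, and `λ_{s→g}^-` is the plus-end rate rescaled so
that the minus-end identity is the plus-end one multiplied by
`(v̄_s^- / v̄_s^+) (τ̄_g^+ / τ̄_g^-)`.
-/

namespace FluxBalance

open Real

lemma div_add_mul_eq_of_mul_eq {vg vs lg ls p : ℝ} (h : vg * ls = vs * lg * p) :
    vg * ls / (lg + ls) = vs * lg / (lg + ls) * p := by
  rw [div_mul_eq_mul_div, h]

lemma apply_div_eq_exp_neg_rpow {α G w : ℝ} {ψ : ℝ → ℝ}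
    (hψ : ∀ x : ℝ, 0 < x → ψ x = exp (-((G / x) ^ α))) (hG : 0 < G) (hw : 0 < w) :
    ψ (G / w) = exp (-(w ^ α)) := by
  rw [hψ _ (div_pos hG hw), div_div_cancel₀ hG.ne']

lemma div_criticalLength_eq {L vs G c w : ℝ} (hL : L ≠ 0) (hvs : vs ≠ 0) (hG : G ≠ 0)
    (hc : c ≠ 0) :
    L / (vs * c / (vs / L * G * c / w)) = G / w := by
  field_simp

lemma plus_end_mul_eq {α L vg vs tg G c w : ℝ} (htg : tg ≠ 0) (hw : w ≠ 0)
    (hweq : w * exp (-(w ^ α)) = vg * tg / L * G * c) :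
    vg * (vs / L * G * c / w) = vs * (1 / tg) * exp (-(w ^ α)) := by
  have hexp : exp (-(w ^ α)) = vg * tg / L * G * c / w := by
    rw [eq_div_iff hw, mul_comm, hweq]
  rw [hexp]
  field_simp

lemma minus_end_mul_eq_of_plus_end {vgp vgm vsp vsm tgp tgm ls p : ℝ} (hvgm : vgm ≠ 0)
    (hvsp : vsp ≠ 0) (htgp : tgp ≠ 0) (hplus : vgp * ls = vsp * (1 / tgp) * p) :
    vgm * (ls * (vsm / vsp) * (vgp * tgp / (vgm * tgm))) = vsm * (1 / tgm) * p := by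
  calc vgm * (ls * (vsm / vsp) * (vgp * tgp / (vgm * tgm)))
      = vgp * ls * (vsm * tgp / (vsp * tgm)) := by field_simp
    _ = vsm * (1 / tgm) * p := by rw [hplus]; field_simp

end FluxBalance

open FluxBalance in
theorem stmt13_general (α : ℝ) (hα : 1 ≤ α)
    (ψ : ℝ → ℝ)
    (hψ : ∀ x : ℝ, 0 < x → ψ x = Real.exp (-((Real.Gamma (1 + 1/α) / x) ^ α)))
    (Lbar vgp vgm vsp vsm tgp tgm : ℝ)
    (hL : 0 < Lbar) (hvgm : 0 < vgm) (hvsp : 0 < vsp)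
    (htgp : 0 < tgp)
    (w : ℝ) (hw : 0 < w)
    (hweq : w * Real.exp (-(w ^ α)) =
      (vgp * tgp / Lbar) * Real.Gamma (1 + 1/α) * Real.log 2)
    (lgsp lgsm lsgp lsgm Lcrit : ℝ)
    (hlgsp : lgsp = 1 / tgp) (hlgsm : lgsm = 1 / tgm)
    (hlsgp : lsgp = (vsp / Lbar) * Real.Gamma (1 + 1/α) * Real.log 2 / w)
    (hlsgm : lsgm = lsgp * (vsm / vsp) * ((vgp * tgp) / (vgm * tgm)))
    (hLcrit : Lcrit = vsp * Real.log 2 / lsgp) :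
    vgp * lsgp / (lgsp + lsgp) = (vsp * lgsp / (lgsp + lsgp)) * ψ (Lbar / Lcrit) ∧
    vgm * lsgm / (lgsm + lsgm) = (vsm * lgsm / (lgsm + lsgm)) * ψ (Lbar / Lcrit) := by
  have hΓ : 0 < Real.Gamma (1 + 1/α) := Real.Gamma_pos_of_pos (by positivity)
  have hψL : ψ (Lbar / Lcrit) = Real.exp (-(w ^ α)) := by
    rw [hLcrit, hlsgp, div_criticalLength_eq hL.ne' hvsp.ne' hΓ.ne' (Real.log_pos one_lt_two).ne']
    exact apply_div_eq_exp_neg_rpow hψ hΓ hw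
  have hplus : vgp * lsgp = vsp * lgsp * ψ (Lbar / Lcrit) := by
    rw [hψL, hlsgp, hlgsp]
    exact plus_end_mul_eq htgp.ne' hw.ne' hweq
  refine ⟨div_add_mul_eq_of_mul_eq hplus, div_add_mul_eq_of_mul_eq ?_⟩
  rw [hlsgm, hlgsm]
  rw [hlgsp] at hplus
  exact minus_end_mul_eq_of_plus_end hvgm.ne' hvsp.ne' htgp.ne' hplus

/-- if `w > 0` solves `w·exp(-w^α) = (v̄_g⁺ τ̄_g⁺/L̄)·Γ(1+1/α)·ln 2`
and the rates are defined by `λ_{g→s}^± = 1/τ̄_g^±`,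
`λ_{s→g}^+ = (v̄_s^+/L̄)·Γ(1+1/α)·ln 2 / w`,
`λ_{s→g}⁻ = λ_{s→g}⁺ · (v̄_s⁻ / v̄_s⁺) · (v̄_g⁺ τ̄_g⁺)/(v̄_g⁻ τ̄_g⁻)`, and
`L_crit = v̄_s^+ ln 2 / λ_{s→g}^+`, then both steady-state flux-balance
constraints hold at the target length `L̄`. -/
theorem stmt13 (α : ℝ) (hα : 1 ≤ α)
    (ψ : ℝ → ℝ) (hψ0 : ψ 0 = 0)
    (hψ : ∀ x : ℝ, 0 < x → ψ x = Real.exp (-((Real.Gamma (1 + 1/α) / x) ^ α)))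
    (Lbar vgp vgm vsp vsm tgp tgm : ℝ)
    (hL : 0 < Lbar) (hvgp : 0 < vgp) (hvgm : 0 < vgm) (hvsp : 0 < vsp)
    (hvsm : 0 < vsm) (htgp : 0 < tgp) (htgm : 0 < tgm)
    (w : ℝ) (hw : 0 < w)
    (hweq : w * Real.exp (-(w ^ α)) =
      (vgp * tgp / Lbar) * Real.Gamma (1 + 1/α) * Real.log 2)
    (lgsp lgsm lsgp lsgm Lcrit : ℝ)
    (hlgsp : lgsp = 1 / tgp) (hlgsm : lgsm = 1 / tgm)
    (hlsgp : lsgp = (vsp / Lbar) * Real.Gamma (1 + 1/α) * Real.log 2 / w)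
    (hlsgm : lsgm = lsgp * (vsm / vsp) * ((vgp * tgp) / (vgm * tgm)))
    (hLcrit : Lcrit = vsp * Real.log 2 / lsgp) :
    vgp * lsgp / (lgsp + lsgp) = (vsp * lgsp / (lgsp + lsgp)) * ψ (Lbar / Lcrit) ∧
    vgm * lsgm / (lgsm + lsgm) = (vsm * lgsm / (lgsm + lsgm)) * ψ (Lbar / Lcrit) :=
  stmt13_general α hα ψ hψ Lbar vgp vgm vsp vsm tgp tgm hL hvgm hvsp htgp w hw hweq lgsp lgsm lsgp
    lsgm Lcrit hlgsp hlgsm hlsgp hlsgm hLcrit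
end

section
/- Hold all parameters fixed except the total tubulin T̃, and for each T̃ > N ℓ₀ let ℓ_*(T̃) ∈ (0, T̃/N) denote the unique solution of h₁(ℓ; T̃) = h₀(ℓ), where h₁(ℓ; T̃) = v^+ (g_*^+(ℓ) + g_*^-(ℓ)/v_g)(T̃ − Nℓ)/(f_{1/2} + T̃ − Nℓ). Then ℓ_* is strictly increasing in T̃: if N ℓ₀ < T̃₁ < T̃₂ then ℓ_*(T̃₁) < ℓ_*(T̃₂). -/
/-! If `ℓ_*(T̃₂) ≤ ℓ_*(T̃₁)` for some `T̃₁ < T̃₂`, the two balance equations contradict each other: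
`φ` is monotone, so both `g_*^±` decrease in `ℓ`, and `ψ_α` increases, so `h₀` is nondecreasing;
while `h₁(ℓ; T̃)` decreases in `ℓ` and strictly increases in `T̃`, because `x ↦ x / (f_{1/2} + x)` is
strictly increasing. Hence
`h₀(ℓ_*(T̃₂)) ≤ h₀(ℓ_*(T̃₁)) = h₁(ℓ_*(T̃₁); T̃₁) < h₁(ℓ_*(T̃₂); T̃₂) = h₀(ℓ_*(T̃₂))`. -/

open Set Real

lemma monotoneOn_exp_neg_div_rpow {c α : ℝ} (hc : 0 ≤ c) (hα : 0 ≤ α) :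
    MonotoneOn (fun x : ℝ => exp (-((c / x) ^ α))) (Ioi 0) := by
  intro a ha b hb hab
  have hcb : c / b ≤ c / a := div_le_div_of_nonneg_left hc ha hab
  exact exp_le_exp.2 (neg_le_neg (rpow_le_rpow (div_nonneg hc (le_of_lt hb)) hcb hα))

lemma monotoneOn_Ici_of_eq_exp_neg_div_rpow {ψ : ℝ → ℝ} {c α : ℝ} (hc : 0 ≤ c) (hα : 0 ≤ α)
    (hψ0 : ψ 0 = 0) (hψ : ∀ x, 0 < x → ψ x = exp (-((c / x) ^ α))) :
    MonotoneOn ψ (Ici 0) := by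
  intro a ha b hb hab
  rcases (mem_Ici.1 ha).eq_or_lt with rfl | ha'
  · rcases (mem_Ici.1 hb).eq_or_lt with rfl | hb'
    · rfl
    · rw [hψ0, hψ b hb']
      positivity
  · have hb' := ha'.trans_le hab
    rw [hψ a ha', hψ b hb']
    exact monotoneOn_exp_neg_div_rpow hc hα ha' hb' hab

section gStar

variable {m η lam l0 : ℝ} {φ : ℝ → ℝ}

lemma gStar_pos (hm : 0 < m) (ℓ : ℝ) : 0 < gStar m η lam l0 φ ℓ := by
  unfold gStar
  positivity

lemma gStar_le_one (hm : 0 ≤ m) (ℓ : ℝ) : gStar m η lam l0 φ ℓ ≤ 1 := by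
  have := le_max_left m ((1 + η * φ (ℓ / l0)) * lam)
  exact div_le_one_of_le₀ (by linarith) (by linarith)

lemma gStar_antitoneOn (hm : 0 < m) (hη : 0 ≤ η) (hlam : 0 ≤ lam) (hl0 : 0 ≤ l0)
    (hφ : MonotoneOn φ (Ici 0)) : AntitoneOn (gStar m η lam l0 φ) (Ici 0) := by
  intro a ha b hb hab
  have hφab : φ (a / l0) ≤ φ (b / l0) :=
    hφ (div_nonneg ha hl0) (div_nonneg hb hl0) (div_le_div_of_nonneg_right hab hl0)
  unfold gStar
  gcongr

end gStar

lemma monotoneOn_one_sub_add_one_sub_div_mul {gp gm ψ : ℝ → ℝ} {vs lcrit : ℝ} (hvs : 0 ≤ vs)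
    (hlcrit : 0 ≤ lcrit) (hgp : AntitoneOn gp (Ici 0)) (hgm : AntitoneOn gm (Ici 0))
    (hgp1 : ∀ ℓ, gp ℓ ≤ 1) (hgm1 : ∀ ℓ, gm ℓ ≤ 1) (hψ : MonotoneOn ψ (Ici 0)) (hψ0 : ψ 0 = 0) :
    MonotoneOn (fun ℓ => ((1 - gp ℓ) + (1 - gm ℓ) / vs) * ψ (ℓ / lcrit)) (Ici 0) := by
  intro a ha b hb hab
  have hψab : ψ (a / lcrit) ≤ ψ (b / lcrit) :=
    hψ (div_nonneg ha hlcrit) (div_nonneg hb hlcrit) (div_le_div_of_nonneg_right hab hlcrit)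
  have hψa : 0 ≤ ψ (a / lcrit) := hψ0 ▸ hψ self_mem_Ici (div_nonneg ha hlcrit) (div_nonneg ha hlcrit)
  have hgmab : (1 - gm a) / vs ≤ (1 - gm b) / vs :=
    div_le_div_of_nonneg_right (by linarith [hgm ha hb hab]) hvs
  have hgmb : 0 ≤ (1 - gm b) / vs := div_nonneg (by linarith [hgm1 b]) hvs
  exact mul_le_mul (by linarith [hgp ha hb hab]) hψab hψa (by linarith [hgp1 b])

lemma strictMonoOn_div_add {f : ℝ} (hf : 0 < f) :
    StrictMonoOn (fun x : ℝ => x / (f + x)) (Ici 0) := by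
  intro a ha b hb hab
  have ha' : 0 ≤ a := ha
  have hb' : 0 ≤ b := hb
  rw [div_lt_div_iff₀ (by linarith) (by linarith)]
  nlinarith

lemma mul_div_add_lt_mul_div_add {C₁ C₂ f x₁ x₂ : ℝ} (hC : C₁ ≤ C₂) (hC₂ : 0 < C₂) (hf : 0 < f)
    (hx₁ : 0 ≤ x₁) (hx : x₁ < x₂) : C₁ * (x₁ / (f + x₁)) < C₂ * (x₂ / (f + x₂)) :=
  calc C₁ * (x₁ / (f + x₁)) ≤ C₂ * (x₁ / (f + x₁)) := by gcongr
    _ < C₂ * (x₂ / (f + x₂)) :=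
      mul_lt_mul_of_pos_left (strictMonoOn_div_add hf hx₁ (hx₁.trans hx.le) hx) hC₂

theorem stmt14_general
    (α : ℝ) (hα : 1 ≤ α)
    (ψ : ℝ → ℝ) (hψ0 : ψ 0 = 0)
    (hψ : ∀ x : ℝ, 0 < x → ψ x = Real.exp (-((Real.Gamma (1 + 1/α) / x) ^ α)))
    (φ : ℝ → ℝ) (hφm : MonotoneOn φ (Set.Ici 0))
    (vp vg vs fhalf lcrit l0 lamp lamm lammin : ℝ)
    (hvp : 0 < vp) (hvg : 0 < vg) (hvs : 0 < vs)
    (hfh : 0 < fhalf) (hlc : 0 < lcrit) (hl0 : 0 < l0)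
    (hlamp : 0 < lamp) (hlamm : 0 < lamm) (hlammin : 0 < lammin)
    (ηp ηm : ℝ) (hηp0 : 0 ≤ ηp) (hηm0 : 0 ≤ ηm)
    (N : ℕ) (hN : 0 < N)
    (gp gm : ℝ → ℝ)
    (hgp : ∀ ℓ, gp ℓ = 1 / (1 + max lammin ((1 + ηp * φ (ℓ / l0)) * lamp)))
    (hgm : ∀ ℓ, gm ℓ = 1 / (1 + max lammin ((1 + ηm * φ (ℓ / l0)) * lamm)))
    (h1 : ℝ → ℝ → ℝ) (h0 : ℝ → ℝ)
    (hh1 : ∀ T ℓ, h1 T ℓ = vp * (gp ℓ + gm ℓ / vg) * ((T - (N : ℝ) * ℓ) / (fhalf + (T - (N : ℝ) * ℓ))))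
    (hh0 : ∀ ℓ, h0 ℓ = ((1 - gp ℓ) + (1 - gm ℓ) / vs) * ψ (ℓ / lcrit))
    (lstar : ℝ → ℝ)
    (hlstar : ∀ T : ℝ, (N : ℝ) * l0 < T →
      lstar T ∈ Set.Ioo 0 (T / (N : ℝ)) ∧ h1 T (lstar T) = h0 (lstar T)) :
    ∀ T₁ T₂ : ℝ, (N : ℝ) * l0 < T₁ → T₁ < T₂ → lstar T₁ < lstar T₂ := by
  intro T₁ T₂ hT₁ hT₁₂
  obtain ⟨⟨-, hℓ₁T⟩, heq₁⟩ := hlstar T₁ hT₁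
  obtain ⟨⟨hℓ₂, -⟩, heq₂⟩ := hlstar T₂ (hT₁.trans hT₁₂)
  replace hℓ₁T := (lt_div_iff₀' (Nat.cast_pos.2 hN)).1 hℓ₁T
  by_contra! hle
  have hℓ₂' : lstar T₂ ∈ Ici (0 : ℝ) := hℓ₂.le
  have hℓ₁' : lstar T₁ ∈ Ici (0 : ℝ) := hℓ₂.le.trans hle
  have hgp' : gp = gStar lammin ηp lamp l0 φ := funext hgp
  have hgm' : gm = gStar lammin ηm lamm l0 φ := funext hgm
  subst hgp' hgm'
  have hgp_anti := gStar_antitoneOn hlammin hηp0 hlamp.le hl0.le hφm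
  have hgm_anti := gStar_antitoneOn hlammin hηm0 hlamm.le hl0.le hφm
  have hψm := monotoneOn_Ici_of_eq_exp_neg_div_rpow (by positivity) (by linarith) hψ0 hψ
  have hh0_le : h0 (lstar T₂) ≤ h0 (lstar T₁) := by
    rw [hh0, hh0]
    exact monotoneOn_one_sub_add_one_sub_div_mul hvs.le hlc.le hgp_anti hgm_anti
      (gStar_le_one hlammin.le) (gStar_le_one hlammin.le) hψm hψ0 hℓ₂' hℓ₁' hle
  have hh1_lt : h1 T₁ (lstar T₁) < h1 T₂ (lstar T₂) := by
    have hNℓ : (N : ℝ) * lstar T₂ ≤ N * lstar T₁ := mul_le_mul_of_nonneg_left hle (Nat.cast_nonneg N)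
    rw [hh1, hh1]
    refine mul_div_add_lt_mul_div_add ?_ ?_ hfh (by linarith) (by linarith)
    · gcongr
      exacts [hgp_anti hℓ₂' hℓ₁' hle, hgm_anti hℓ₂' hℓ₁' hle]
    · exact mul_pos hvp (add_pos (gStar_pos hlammin _) (div_pos (gStar_pos hlammin _) hvg))
  linarith

/-- holding all parameters fixed except the total tubulin `T̃`,
the unique steady-state length `ℓ_*(T̃) ∈ (0, T̃/N)` solving
`h₁(ℓ; T̃) = h₀(ℓ)` is strictly increasing in `T̃`. -/
theorem stmt14
    (α : ℝ) (hα : 1 ≤ α)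
    (ψ : ℝ → ℝ) (hψ0 : ψ 0 = 0)
    (hψ : ∀ x : ℝ, 0 < x → ψ x = Real.exp (-((Real.Gamma (1 + 1/α) / x) ^ α)))
    (φ : ℝ → ℝ) (hφc : ContinuousOn φ (Set.Ici 0)) (hφm : MonotoneOn φ (Set.Ici 0))
    (hφ0 : φ 0 = -1) (hφ1 : φ 1 = 0)
    (δsp vp vg vs fhalf lcrit l0 lamp lamm lamsg lammin : ℝ)
    (hδsp : 0 < δsp) (hvp : 0 < vp) (hvg : 0 < vg) (hvs : 0 < vs)
    (hfh : 0 < fhalf) (hlc : 0 < lcrit) (hl0 : 0 < l0)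
    (hlamp : 0 < lamp) (hlamm : 0 < lamm) (hlamsg : 0 < lamsg) (hlammin : 0 < lammin)
    (ηp ηm : ℝ) (hηp0 : 0 ≤ ηp) (hηm0 : 0 ≤ ηm)
    (N : ℕ) (hN : 0 < N)
    (gp gm : ℝ → ℝ)
    (hgp : ∀ ℓ, gp ℓ = 1 / (1 + max lammin ((1 + ηp * φ (ℓ / l0)) * lamp)))
    (hgm : ∀ ℓ, gm ℓ = 1 / (1 + max lammin ((1 + ηm * φ (ℓ / l0)) * lamm)))
    (h1 : ℝ → ℝ → ℝ) (h0 : ℝ → ℝ)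
    (hh1 : ∀ T ℓ, h1 T ℓ = vp * (gp ℓ + gm ℓ / vg) * ((T - (N : ℝ) * ℓ) / (fhalf + (T - (N : ℝ) * ℓ))))
    (hh0 : ∀ ℓ, h0 ℓ = ((1 - gp ℓ) + (1 - gm ℓ) / vs) * ψ (ℓ / lcrit))
    (lstar : ℝ → ℝ)
    (hlstar : ∀ T : ℝ, (N : ℝ) * l0 < T →
      lstar T ∈ Set.Ioo 0 (T / (N : ℝ)) ∧ h1 T (lstar T) = h0 (lstar T)) :
    ∀ T₁ T₂ : ℝ, (N : ℝ) * l0 < T₁ → T₁ < T₂ → lstar T₁ < lstar T₂ :=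
  stmt14_general α hα ψ hψ0 hψ φ hφm vp vg vs fhalf lcrit l0 lamp lamm lammin hvp hvg hvs hfh hlc
    hl0 hlamp hlamm hlammin ηp ηm hηp0 hηm0 N hN gp gm hgp hgm h1 h0 hh1 hh0 lstar hlstar
end

section
/- Suppose the length-dependence of catastrophe is active at both ends, η^+ > 0 and η^- > 0, and that the admissible catastrophe shape function satisfies φ(x) → ∞ as x → ∞. Then the steady-state average length is uniformly bounded in the total tubulin: there exists ℓ̄ > 0, independent of T̃, such that for every T̃ > N ℓ₀ the unique solution ℓ_*(T̃) ∈ (0, T̃/N) of h₁(ℓ; T̃) = h₀(ℓ) satisfies ℓ_*(T̃) ≤ ℓ̄. -/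
/-!
As `ℓ → ∞`, `φ(ℓ/ℓ₀) → ∞` drives both catastrophe factors `g_*^±(ℓ)` to `0`, while
`ψ_α(ℓ/ℓ_crit) → 1`. Hence `h₀(ℓ) → 1 + 1/v_s > 0`, whereas
`h₁(ℓ; T̃) ≤ v⁺ (g_*^+(ℓ) + g_*^-(ℓ)/v_g) → 0` uniformly in `T̃`, because the Michaelis–Menten
factor `u/(f_{1/2} + u)` lies in `[0, 1)`. So `h₁ < h₀` beyond some length independent of `T̃`.
-/

open Filter Topology

lemma tendsto_one_div_one_add_max_nhds_zero {ι : Type*} {l : Filter ι} {f : ι → ℝ} (m : ℝ)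
    (hf : Tendsto f l atTop) : Tendsto (fun i => 1 / (1 + max m (f i))) l (𝓝 0) := by
  simp only [one_div]
  exact (tendsto_atTop_add_const_left l 1
    (tendsto_atTop_mono (fun i => le_max_right m (f i)) hf)).inv_tendsto_atTop

lemma tendsto_one_add_mul_comp_div_mul_atTop {φ : ℝ → ℝ} (hφ : Tendsto φ atTop atTop)
    {η lam l₀ : ℝ} (hη : 0 < η) (hlam : 0 < lam) (hl₀ : 0 < l₀) :
    Tendsto (fun ℓ => (1 + η * φ (ℓ / l₀)) * lam) atTop atTop :=
  (tendsto_atTop_add_const_left _ 1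
    ((hφ.comp (tendsto_id.atTop_div_const hl₀)).const_mul_atTop hη)).atTop_mul_const hlam

lemma tendsto_exp_neg_div_rpow_nhds_one (a : ℝ) {α : ℝ} (hα : 0 < α) :
    Tendsto (fun x => Real.exp (-((a / x) ^ α))) atTop (𝓝 1) := by
  have hpow : Tendsto (fun x : ℝ => (a / x) ^ α) atTop (𝓝 0) := by
    have := ((Real.continuousAt_rpow_const 0 α (Or.inr hα.le)).tendsto).comp
      (tendsto_const_nhds.div_atTop (tendsto_id (α := ℝ)) (a := a))
    rwa [Real.zero_rpow hα.ne'] at this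
  have := (Real.continuous_exp.tendsto 0).comp (neg_zero (G := ℝ) ▸ hpow.neg)
  rwa [Real.exp_zero] at this

lemma mul_div_add_le_self {a c u : ℝ} (ha : 0 ≤ a) (hc : 0 < c) (hu : 0 ≤ u) :
    a * (u / (c + u)) ≤ a :=
  mul_le_of_le_one_right ha (div_le_one_of_le₀ (by linarith) (by linarith))

theorem stmt15_general
    (α : ℝ) (hα : 1 ≤ α)
    (ψ : ℝ → ℝ)
    (hψ : ∀ x : ℝ, 0 < x → ψ x = Real.exp (-((Real.Gamma (1 + 1/α) / x) ^ α)))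
    (φ : ℝ → ℝ)
    (vp vg vs fhalf lcrit l0 lamp lamm lammin : ℝ)
    (hvp : 0 < vp) (hvg : 0 < vg) (hvs : 0 < vs)
    (hfh : 0 < fhalf) (hlc : 0 < lcrit) (hl0 : 0 < l0)
    (hlamp : 0 < lamp) (hlamm : 0 < lamm) (hlammin : 0 < lammin)
    (ηp ηm : ℝ)
    (N : ℕ) (hN : 0 < N)
    (gp gm : ℝ → ℝ)
    (hgp : ∀ ℓ, gp ℓ = 1 / (1 + max lammin ((1 + ηp * φ (ℓ / l0)) * lamp)))
    (hgm : ∀ ℓ, gm ℓ = 1 / (1 + max lammin ((1 + ηm * φ (ℓ / l0)) * lamm)))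
    (h1 : ℝ → ℝ → ℝ) (h0 : ℝ → ℝ)
    (hh1 : ∀ T ℓ, h1 T ℓ = vp * (gp ℓ + gm ℓ / vg) * ((T - (N : ℝ) * ℓ) / (fhalf + (T - (N : ℝ) * ℓ))))
    (hh0 : ∀ ℓ, h0 ℓ = ((1 - gp ℓ) + (1 - gm ℓ) / vs) * ψ (ℓ / lcrit))
    (hηp : 0 < ηp) (hηm : 0 < ηm)
    (hφtop : Filter.Tendsto φ Filter.atTop Filter.atTop) :
    ∃ lbar : ℝ, 0 < lbar ∧ ∀ T : ℝ, (N : ℝ) * l0 < T →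
      ∀ l ∈ Set.Ioo 0 (T / (N : ℝ)), h1 T l = h0 l → l ≤ lbar := by
  have hgp_lim : Tendsto gp atTop (𝓝 0) := by
    simpa only [← funext hgp] using tendsto_one_div_one_add_max_nhds_zero lammin
      (tendsto_one_add_mul_comp_div_mul_atTop hφtop hηp hlamp hl0)
  have hgm_lim : Tendsto gm atTop (𝓝 0) := by
    simpa only [← funext hgm] using tendsto_one_div_one_add_max_nhds_zero lammin
      (tendsto_one_add_mul_comp_div_mul_atTop hφtop hηm hlamm hl0)
  have hψ_lim : Tendsto (fun ℓ => ψ (ℓ / lcrit)) atTop (𝓝 1) :=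
    ((tendsto_exp_neg_div_rpow_nhds_one _ (by linarith)).congr'
      ((eventually_gt_atTop 0).mono fun x hx => (hψ x hx).symm)).comp
      (tendsto_id.atTop_div_const hlc)
  have hG_lim : Tendsto (fun ℓ => vp * (gp ℓ + gm ℓ / vg)) atTop (𝓝 0) := by
    simpa using (hgp_lim.add (hgm_lim.div_const vg)).const_mul vp
  have hh0_lim : Tendsto h0 atTop (𝓝 (1 + 1 / vs)) := by
    have one_sub : ∀ g : ℝ → ℝ, Tendsto g atTop (𝓝 0) →
        Tendsto (fun ℓ => 1 - g ℓ) atTop (𝓝 1) := fun g hg => by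
      simpa using tendsto_const_nhds.sub hg
    simpa [← funext hh0] using
      (((one_sub gp hgp_lim).add ((one_sub gm hgm_lim).div_const vs)).mul hψ_lim)
  obtain ⟨K, hK⟩ := eventually_atTop.mp (hG_lim.eventually_lt hh0_lim (by positivity))
  refine ⟨max K 1, by positivity, fun T _ l hl heq => ?_⟩
  by_contra! hlK
  have hNl : (N : ℝ) * l < T := by
    linarith [(lt_div_iff₀ (Nat.cast_pos.mpr hN)).mp hl.2]
  have hh1_le : h1 T l ≤ vp * (gp l + gm l / vg) := by
    have : 0 ≤ vp * (gp l + gm l / vg) := by rw [hgp, hgm]; positivity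
    exact hh1 T l ▸ mul_div_add_le_self this hfh (by linarith)
  linarith [hK l ((max_lt_iff.mp hlK).1).le]

/-- if length-dependent catastrophe is active at both ends
(`η⁺ > 0`, `η⁻ > 0`) and `φ(x) → ∞` as `x → ∞`, then the steady-state average
length is uniformly bounded in the total tubulin: there is `ℓ̄ > 0`,
independent of `T̃`, bounding every solution `ℓ_*(T̃) ∈ (0, T̃/N)` of
`h₁(ℓ; T̃) = h₀(ℓ)`. -/
theorem stmt15
    (α : ℝ) (hα : 1 ≤ α)
    (ψ : ℝ → ℝ) (hψ0 : ψ 0 = 0)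
    (hψ : ∀ x : ℝ, 0 < x → ψ x = Real.exp (-((Real.Gamma (1 + 1/α) / x) ^ α)))
    (φ : ℝ → ℝ) (hφc : ContinuousOn φ (Set.Ici 0)) (hφm : MonotoneOn φ (Set.Ici 0))
    (hφ0 : φ 0 = -1) (hφ1 : φ 1 = 0)
    (δsp vp vg vs fhalf lcrit l0 lamp lamm lamsg lammin : ℝ)
    (hδsp : 0 < δsp) (hvp : 0 < vp) (hvg : 0 < vg) (hvs : 0 < vs)
    (hfh : 0 < fhalf) (hlc : 0 < lcrit) (hl0 : 0 < l0)
    (hlamp : 0 < lamp) (hlamm : 0 < lamm) (hlamsg : 0 < lamsg) (hlammin : 0 < lammin)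
    (ηp ηm : ℝ) (hηp0 : 0 ≤ ηp) (hηm0 : 0 ≤ ηm)
    (N : ℕ) (hN : 0 < N)
    (gp gm : ℝ → ℝ)
    (hgp : ∀ ℓ, gp ℓ = 1 / (1 + max lammin ((1 + ηp * φ (ℓ / l0)) * lamp)))
    (hgm : ∀ ℓ, gm ℓ = 1 / (1 + max lammin ((1 + ηm * φ (ℓ / l0)) * lamm)))
    (h1 : ℝ → ℝ → ℝ) (h0 : ℝ → ℝ)
    (hh1 : ∀ T ℓ, h1 T ℓ = vp * (gp ℓ + gm ℓ / vg) * ((T - (N : ℝ) * ℓ) / (fhalf + (T - (N : ℝ) * ℓ))))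
    (hh0 : ∀ ℓ, h0 ℓ = ((1 - gp ℓ) + (1 - gm ℓ) / vs) * ψ (ℓ / lcrit))
    (hηp : 0 < ηp) (hηm : 0 < ηm)
    (hφtop : Filter.Tendsto φ Filter.atTop Filter.atTop) :
    ∃ lbar : ℝ, 0 < lbar ∧ ∀ T : ℝ, (N : ℝ) * l0 < T →
      ∀ l ∈ Set.Ioo 0 (T / (N : ℝ)), h1 T l = h0 l → l ≤ lbar :=
  stmt15_general α hα ψ hψ φ vp vg vs fhalf lcrit l0 lamp lamm lammin hvp hvg hvs hfh hlc hl0 hlamp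
    hlamm hlammin ηp ηm N hN gp gm hgp hgm h1 h0 hh1 hh0 hηp hηm hφtop
end

section
/- Suppose there is no length-dependence in the catastrophe rate, η^+ = η^- = 0 and λ̃_min ≤ min(λ^+, λ^-), so that the growth fractions are the constants ḡ^± = 1/(1 + λ^±). If the growth capacity exceeds the maximal shrinkage flux, i.e. v^+ (ḡ^+ + ḡ^- /v_g) > (1 − ḡ^+) + (1 − ḡ^-)/v_s, then the steady-state average length grows without bound as total tubulin increases: the unique solution ℓ_*(T̃) ∈ (0, T̃/N) of h₁(ℓ; T̃) = h₀(ℓ) satisfies ℓ_*(T̃) → ∞ as T̃ → ∞. -/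
/-!
With `η^± = 0` the growth fractions are constants, so `h₀(ℓ) = B ψ_α(ℓ/ℓ_crit) ≤ B` and
`h₁(ℓ; T̃) = A s / (f_{1/2} + s)` with free tubulin `s = T̃ − Nℓ`, where `B < A` by the capacity
hypothesis. If `ℓ_*(T̃)` stayed below some `M` along large `T̃`, then `s ≥ T̃ − NM → ∞`, and the
saturating factor `s / (f_{1/2} + s) → 1` would push `h₁` above `B ≥ h₀`, contradicting
`h₁ = h₀` at `ℓ_*`.
-/

open Filter Topology

theorem tendsto_div_const_add_atTop (c : ℝ) :
    Tendsto (fun s : ℝ => s / (c + s)) atTop (𝓝 1) := by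
  have hlim : Tendsto (fun s : ℝ => 1 / (c * s⁻¹ + 1)) atTop (𝓝 (1 / (c * 0 + 1))) :=
    tendsto_const_nhds.div ((tendsto_inv_atTop_zero.const_mul c).add_const 1) (by simp)
  rw [mul_zero, zero_add, div_one] at hlim
  refine hlim.congr' ?_
  filter_upwards [eventually_gt_atTop 0] with s hs
  field_simp

theorem tendsto_atTop_of_saturating_flux_le {A B f c : ℝ} {u : ℝ → ℝ} (hBA : B < A)
    (hc : 0 ≤ c) (hu : ∀ᶠ T in atTop, A * ((T - c * u T) / (f + (T - c * u T))) ≤ B) :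
    Tendsto u atTop atTop := by
  have hflux : Tendsto (fun s : ℝ => A * (s / (f + s))) atTop (𝓝 A) := by
    simpa using (tendsto_div_const_add_atTop f).const_mul A
  obtain ⟨S, hS⟩ := eventually_atTop.1 (hflux.eventually_const_lt hBA)
  refine tendsto_atTop.2 fun M => ?_
  filter_upwards [hu, eventually_ge_atTop (S + c * M)] with T hT hTS
  by_contra! hlt
  have hfree : S ≤ T - c * u T := by nlinarith [mul_le_mul_of_nonneg_left hlt.le hc]
  exact (hS _ hfree).not_ge hT

theorem exp_neg_rpow_le_one {x : ℝ} (hx : 0 ≤ x) (y : ℝ) : Real.exp (-(x ^ y)) ≤ 1 :=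
  Real.exp_le_one_iff.2 (neg_nonpos.2 (Real.rpow_nonneg hx y))

theorem stmt16_general
    (α : ℝ) (hα : 1 ≤ α)
    (ψ : ℝ → ℝ)
    (hψ : ∀ x : ℝ, 0 < x → ψ x = Real.exp (-((Real.Gamma (1 + 1/α) / x) ^ α)))
    (φ : ℝ → ℝ)
    (vp vg vs fhalf lcrit l0 lamp lamm lammin : ℝ)
    (hvs : 0 < vs)
    (hlc : 0 < lcrit)
    (hlamp : 0 < lamp) (hlamm : 0 < lamm)
    (ηp ηm : ℝ)
    (N : ℕ)
    (gp gm : ℝ → ℝ)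
    (hgp : ∀ ℓ, gp ℓ = 1 / (1 + max lammin ((1 + ηp * φ (ℓ / l0)) * lamp)))
    (hgm : ∀ ℓ, gm ℓ = 1 / (1 + max lammin ((1 + ηm * φ (ℓ / l0)) * lamm)))
    (h1 : ℝ → ℝ → ℝ) (h0 : ℝ → ℝ)
    (hh1 : ∀ T ℓ, h1 T ℓ = vp * (gp ℓ + gm ℓ / vg) * ((T - (N : ℝ) * ℓ) / (fhalf + (T - (N : ℝ) * ℓ))))
    (hh0 : ∀ ℓ, h0 ℓ = ((1 - gp ℓ) + (1 - gm ℓ) / vs) * ψ (ℓ / lcrit))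
    (hηp : ηp = 0) (hηm : ηm = 0) (hminle : lammin ≤ min lamp lamm)
    (hcap : (1 - 1 / (1 + lamp)) + (1 - 1 / (1 + lamm)) / vs <
      vp * (1 / (1 + lamp) + (1 / (1 + lamm)) / vg))
    (lstar : ℝ → ℝ)
    (hlstar : ∀ T : ℝ, (N : ℝ) * l0 < T →
      lstar T ∈ Set.Ioo 0 (T / (N : ℝ)) ∧ h1 T (lstar T) = h0 (lstar T)) :
    Filter.Tendsto lstar Filter.atTop Filter.atTop := by
  have hgp' : ∀ ℓ, gp ℓ = 1 / (1 + lamp) := fun ℓ => by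
    rw [hgp, hηp, zero_mul, add_zero, one_mul, max_eq_right (hminle.trans (min_le_left _ _))]
  have hgm' : ∀ ℓ, gm ℓ = 1 / (1 + lamm) := fun ℓ => by
    rw [hgm, hηm, zero_mul, add_zero, one_mul, max_eq_right (hminle.trans (min_le_right _ _))]
  have hshrink_nonneg : 0 ≤ (1 - 1 / (1 + lamp)) + (1 - 1 / (1 + lamm)) / vs := by
    have hp : 1 / (1 + lamp) ≤ 1 := (div_le_one (by linarith)).2 (by linarith)
    have hm : 1 / (1 + lamm) ≤ 1 := (div_le_one (by linarith)).2 (by linarith)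
    linarith [div_nonneg (sub_nonneg.2 hm) hvs.le]
  have hΓ : 0 < Real.Gamma (1 + 1 / α) :=
    Real.Gamma_pos_of_pos (by have := one_div_nonneg.2 (zero_le_one.trans hα); linarith)
  have hh0_le : ∀ ℓ, 0 < ℓ → h0 ℓ ≤ (1 - 1 / (1 + lamp)) + (1 - 1 / (1 + lamm)) / vs := by
    intro ℓ hℓ
    have hx : 0 < ℓ / lcrit := div_pos hℓ hlc
    rw [hh0, hgp', hgm', hψ _ hx]
    exact mul_le_of_le_one_right hshrink_nonneg (exp_neg_rpow_le_one (div_pos hΓ hx).le α)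
  refine tendsto_atTop_of_saturating_flux_le (f := fhalf) hcap (Nat.cast_nonneg N) ?_
  filter_upwards [eventually_gt_atTop ((N : ℝ) * l0)] with T hT
  obtain ⟨⟨hpos, -⟩, heq⟩ := hlstar T hT
  have hbalance := hh0_le _ hpos
  rwa [← heq, hh1, hgp', hgm'] at hbalance

/-- if there is no length-dependence in the catastrophe rate
(`η⁺ = η⁻ = 0`, `λ̃_min ≤ min(λ⁺, λ⁻)`), so that the growth fractions are the
constants `ḡ^± = 1/(1+λ^±)`, and growth capacity exceeds the maximal
shrinkage flux, then the steady-state length `ℓ_*(T̃)` grows without bound as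
`T̃ → ∞`. -/
theorem stmt16
    (α : ℝ) (hα : 1 ≤ α)
    (ψ : ℝ → ℝ) (hψ0 : ψ 0 = 0)
    (hψ : ∀ x : ℝ, 0 < x → ψ x = Real.exp (-((Real.Gamma (1 + 1/α) / x) ^ α)))
    (φ : ℝ → ℝ) (hφc : ContinuousOn φ (Set.Ici 0)) (hφm : MonotoneOn φ (Set.Ici 0))
    (hφ0 : φ 0 = -1) (hφ1 : φ 1 = 0)
    (δsp vp vg vs fhalf lcrit l0 lamp lamm lamsg lammin : ℝ)
    (hδsp : 0 < δsp) (hvp : 0 < vp) (hvg : 0 < vg) (hvs : 0 < vs)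
    (hfh : 0 < fhalf) (hlc : 0 < lcrit) (hl0 : 0 < l0)
    (hlamp : 0 < lamp) (hlamm : 0 < lamm) (hlamsg : 0 < lamsg) (hlammin : 0 < lammin)
    (ηp ηm : ℝ) (hηp0 : 0 ≤ ηp) (hηm0 : 0 ≤ ηm)
    (N : ℕ) (hN : 0 < N)
    (gp gm : ℝ → ℝ)
    (hgp : ∀ ℓ, gp ℓ = 1 / (1 + max lammin ((1 + ηp * φ (ℓ / l0)) * lamp)))
    (hgm : ∀ ℓ, gm ℓ = 1 / (1 + max lammin ((1 + ηm * φ (ℓ / l0)) * lamm)))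
    (h1 : ℝ → ℝ → ℝ) (h0 : ℝ → ℝ)
    (hh1 : ∀ T ℓ, h1 T ℓ = vp * (gp ℓ + gm ℓ / vg) * ((T - (N : ℝ) * ℓ) / (fhalf + (T - (N : ℝ) * ℓ))))
    (hh0 : ∀ ℓ, h0 ℓ = ((1 - gp ℓ) + (1 - gm ℓ) / vs) * ψ (ℓ / lcrit))
    (hηp : ηp = 0) (hηm : ηm = 0) (hminle : lammin ≤ min lamp lamm)
    (hcap : (1 - 1 / (1 + lamp)) + (1 - 1 / (1 + lamm)) / vs <
      vp * (1 / (1 + lamp) + (1 / (1 + lamm)) / vg))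
    (lstar : ℝ → ℝ)
    (hlstar : ∀ T : ℝ, (N : ℝ) * l0 < T →
      lstar T ∈ Set.Ioo 0 (T / (N : ℝ)) ∧ h1 T (lstar T) = h0 (lstar T)) :
    Filter.Tendsto lstar Filter.atTop Filter.atTop :=
  stmt16_general α hα ψ hψ φ vp vg vs fhalf lcrit l0 lamp lamm lammin hvs hlc hlamp hlamm ηp ηm N gp
    gm hgp hgm h1 h0 hh1 hh0 hηp hηm hminle hcap lstar hlstar
end
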